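/- For p = q = r = 0.05, the hybrid feedback strategy strictly outperforms the secret-key feedback strategy: Cin1(0.05,0.05,0.05) ⊊ Cin2(0.05,0.05,0.05). In particular, the point (R₁,R₂) = (1.0, 0.3) belongs to Cin2(0.05,0.05,0.05) but not to Cin1(0.05,0.05,0.05). -/

import Mathlib

/-- The binary entropy function to base 2, with the convention h(0)=h(1)=0
(automatic since `Real.logb 2 0 = 0`). -/
noncomputable def binEnt (x : ℝ) : ℝ := -x * Real.logb 2 x - (1 - x) * Real.logb 2 (1 - x)

/-- The binary convolution `a ⋆ b = a(1-b)+(1-a)b`. -/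
def binConv (a b : ℝ) : ℝ := a * (1 - b) + (1 - a) * b

/-- Non-feedback inner bound for the Dueck-type example with `Z₀ → Z₁ → Z₂`. -/
noncomputable def Cin (p q r : ℝ) : Set (ℝ × ℝ) :=
  {R : ℝ × ℝ | 0 ≤ R.1 ∧ R.1 ≤ 1 - binEnt q ∧ 0 ≤ R.2 ∧ R.2 ≤ 1 - binEnt (binConv r q)}

/-- Secret-key feedback inner bound for the Dueck-type example with `Z₀ → Z₁ → Z₂`. -/
noncomputable def Cin1 (p q r : ℝ) : Set (ℝ × ℝ) :=
  {R : ℝ × ℝ | 0 ≤ R.1 ∧ 0 ≤ R.2 ∧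
    R.1 ≤ 1 - binEnt (binConv r q) + binEnt r ∧
    R.2 ≤ 1 - binEnt (binConv r q) + binEnt r ∧
    R.1 ≤ 2 - binEnt p - binEnt q ∧
    R.2 ≤ 2 - binEnt p - binEnt (binConv r q) ∧
    R.1 + R.2 ≤ 3 - binEnt p - binEnt q - binEnt (binConv r q)}

/-- Hybrid feedback inner bound for the Dueck-type example with `Z₀ → Z₁ → Z₂`. -/
noncomputable def Cin2 (p q r : ℝ) : Set (ℝ × ℝ) :=
  {R : ℝ × ℝ | 0 ≤ R.1 ∧ 0 ≤ R.2 ∧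
    R.1 ≤ 1 + binEnt q - binEnt (binConv r q) + binEnt r ∧
    R.2 ≤ 1 + binEnt r ∧
    R.1 ≤ 2 - binEnt p - binEnt q ∧
    R.2 ≤ 2 - binEnt p - binEnt (binConv r q) ∧
    R.1 + R.2 ≤ 3 - binEnt p - binEnt q - binEnt r}

/-- Cut-set outer bound for the Dueck-type example with `Z₀ → Z₁ → Z₂`. -/
noncomputable def Cout (p q r : ℝ) : Set (ℝ × ℝ) :=
  {R : ℝ × ℝ | 0 ≤ R.1 ∧ 0 ≤ R.2 ∧
    R.1 ≤ 2 - binEnt p - binEnt q ∧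
    R.2 ≤ 2 - binEnt p - binEnt (binConv r q) ∧
    R.1 + R.2 ≤ 3 - binEnt p - binEnt q - binEnt r}


/-! Binary entropy in bits is `Real.binEntropy / log 2`, so it is concave and strictly increasing
on `[0, 1/2]`. For `q, r ≤ 1/2` we have `r ≤ r ⋆ q ≤ 1/2`, hence `h(r) ≤ h(r ⋆ q)`, and this makes
each constraint of `Cin1` imply the corresponding one of `Cin2`. At `p = q = r = 1/20` we have
`r ⋆ q = 19/200`; the point `(1, 0.3)` violates `R₁ ≤ 1 - h(r ⋆ q) + h(r)` because `h(r) < h(r ⋆ q)`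
there, and it lies in `Cin2` because `h(19/200) ≤ 2 h(1/20)` (concavity and `h(0) = 0`) and
`h(1/20) ≤ 1/2`. -/

open Set Real

lemma binEnt_eq_inv_log_two_mul (x : ℝ) : binEnt x = (log 2)⁻¹ * binEntropy x := by
  simp only [binEnt, binEntropy, logb, log_inv]
  ring

lemma binEnt_nonneg {x : ℝ} (hx₀ : 0 ≤ x) (hx₁ : x ≤ 1) : 0 ≤ binEnt x := by
  rw [binEnt_eq_inv_log_two_mul]
  exact mul_nonneg (inv_nonneg.2 (log_nonneg one_le_two)) (binEntropy_nonneg hx₀ hx₁)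

lemma binEnt_le_one (x : ℝ) : binEnt x ≤ 1 := by
  rw [binEnt_eq_inv_log_two_mul, inv_mul_le_one₀ (log_pos one_lt_two)]
  exact binEntropy_le_log_two

lemma binEnt_strictMonoOn : StrictMonoOn binEnt (Icc 0 2⁻¹) := fun x hx y hy hxy => by
  simp only [binEnt_eq_inv_log_two_mul]
  exact mul_lt_mul_of_pos_left (binEntropy_strictMonoOn hx hy hxy) (inv_pos.2 (log_pos one_lt_two))

lemma concaveOn_binEnt : ConcaveOn ℝ (Icc 0 1) binEnt := by
  have h : binEnt = fun x => (log 2)⁻¹ • binEntropy x := funext binEnt_eq_inv_log_two_mul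
  rw [h]
  exact strictConcave_binEntropy.concaveOn.smul (inv_nonneg.2 (log_nonneg one_le_two))

/-- Concavity together with `h(0) = 0`. -/
lemma mul_binEnt_le_binEnt_mul {t x : ℝ} (ht₀ : 0 ≤ t) (ht₁ : t ≤ 1) (hx₀ : 0 ≤ x) (hx₁ : x ≤ 1) :
    t * binEnt x ≤ binEnt (t * x) := by
  have h := concaveOn_binEnt.2 (left_mem_Icc.2 zero_le_one) ⟨hx₀, hx₁⟩ (sub_nonneg.2 ht₁) ht₀
    (sub_add_cancel 1 t)
  simpa [binEnt] using h

lemma binConv_sub_left (r q : ℝ) : binConv r q - r = q * (1 - 2 * r) := by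
  unfold binConv; ring

lemma inv_two_sub_binConv (r q : ℝ) : 2⁻¹ - binConv r q = (1 - 2 * r) * (1 - 2 * q) / 2 := by
  unfold binConv; ring

lemma binConv_mem_Icc {r q : ℝ} (hr : r ∈ Icc 0 2⁻¹) (hq : q ∈ Icc 0 2⁻¹) :
    binConv r q ∈ Icc 0 2⁻¹ := by
  obtain ⟨hr₀, hr₁⟩ := hr
  obtain ⟨hq₀, hq₁⟩ := hq
  constructor
  · nlinarith [binConv_sub_left r q]
  · nlinarith [inv_two_sub_binConv r q]

lemma binEnt_le_binEnt_binConv {r q : ℝ} (hr : r ∈ Icc 0 2⁻¹) (hq : q ∈ Icc 0 2⁻¹) :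
    binEnt r ≤ binEnt (binConv r q) := by
  refine binEnt_strictMonoOn.monotoneOn hr (binConv_mem_Icc hr hq) ?_
  nlinarith [binConv_sub_left r q, hr.2, hq.1]

lemma binEnt_lt_binEnt_binConv {r q : ℝ} (hr : r ∈ Ico 0 2⁻¹) (hq : q ∈ Ioc 0 2⁻¹) :
    binEnt r < binEnt (binConv r q) := by
  refine binEnt_strictMonoOn ⟨hr.1, hr.2.le⟩ (binConv_mem_Icc ⟨hr.1, hr.2.le⟩ ⟨hq.1.le, hq.2⟩) ?_
  nlinarith [binConv_sub_left r q, hr.2, hq.1]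

theorem Cin1_subset_Cin2 (p : ℝ) {q r : ℝ} (hq : q ∈ Icc 0 2⁻¹) (hr : r ∈ Icc 0 2⁻¹) :
    Cin1 p q r ⊆ Cin2 p q r := by
  have hq₀ : 0 ≤ binEnt q := binEnt_nonneg hq.1 (by linarith [hq.2])
  have hrq := binConv_mem_Icc hr hq
  have hrq₀ : 0 ≤ binEnt (binConv r q) := binEnt_nonneg hrq.1 (by linarith [hrq.2])
  have hmono := binEnt_le_binEnt_binConv hr hq
  rintro R ⟨h₁, h₂, h₃, h₄, h₅, h₆, h₇⟩
  exact ⟨h₁, h₂, by linarith, by linarith, h₅, h₆, by linarith⟩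

lemma binConv_one_twentieth : binConv 0.05 0.05 = (0.095 : ℝ) := by
  norm_num [binConv]

lemma binEnt_binConv_one_twentieth_le :
    binEnt (binConv 0.05 0.05) ≤ 2 * binEnt 0.05 := by
  have h := mul_binEnt_le_binEnt_mul (t := 10 / 19) (x := 0.095)
    (by norm_num) (by norm_num) (by norm_num) (by norm_num)
  have h₀ : 0 ≤ binEnt 0.095 := binEnt_nonneg (by norm_num) (by norm_num)
  rw [binConv_one_twentieth]
  norm_num at h
  linarith

/-- In nats, `h(1/20) = log 20 / 20 + (19/20) log (20/19) ≤ (5/20) log 2 + 1/20`. -/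
lemma binEnt_one_twentieth_le_half : binEnt 0.05 ≤ 2⁻¹ := by
  have h20 : log 20 ≤ 5 * log 2 := by
    calc log 20 ≤ log (2 ^ 5) := log_le_log (by norm_num) (by norm_num)
      _ = 5 * log 2 := by rw [log_pow]; norm_num
  have h19 : log (20 / 19) ≤ 1 / 19 := by
    linarith [log_le_sub_one_of_pos (show (0 : ℝ) < 20 / 19 by norm_num)]
  have hnats : binEntropy 0.05 = 0.05 * log 20 + 0.95 * log (20 / 19) := by
    rw [binEntropy]; norm_num
  have hlog2 := log_two_gt_d9
  rw [binEnt_eq_inv_log_two_mul, inv_mul_le_iff₀ (log_pos one_lt_two), hnats]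
  linarith

/-- For `p = q = r = 0.05`, the hybrid feedback strategy strictly outperforms
the secret-key feedback strategy; the point `(1.0, 0.3)` witnesses the gap. -/
theorem Cin1_ssubset_Cin2 :
    Cin1 0.05 0.05 0.05 ⊂ Cin2 0.05 0.05 0.05 ∧
    ((1.0, 0.3) : ℝ × ℝ) ∈ Cin2 0.05 0.05 0.05 ∧
    ((1.0, 0.3) : ℝ × ℝ) ∉ Cin1 0.05 0.05 0.05 := by
  have hx : (0.05 : ℝ) ∈ Icc 0 2⁻¹ := by norm_num
  have hlt : binEnt 0.05 < binEnt (binConv 0.05 0.05) :=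
    binEnt_lt_binEnt_binConv (by norm_num) (by norm_num)
  have hle := binEnt_binConv_one_twentieth_le
  have hhalf := binEnt_one_twentieth_le_half
  have hone := binEnt_le_one (binConv 0.05 0.05)
  have hmem : ((1.0, 0.3) : ℝ × ℝ) ∈ Cin2 0.05 0.05 0.05 := by
    refine ⟨?_, ?_, ?_, ?_, ?_, ?_, ?_⟩ <;> norm_num <;> linarith
  have hnot : ((1.0, 0.3) : ℝ × ℝ) ∉ Cin1 0.05 0.05 0.05 := fun ⟨_, _, h, _⟩ => by
    norm_num at h
    linarith
  have hsub := Cin1_subset_Cin2 0.05 hx hx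
  exact ⟨(ssubset_iff_of_subset hsub).2 ⟨_, hmem, hnot⟩, hmem, hnot⟩
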